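/- arXiv:2206.09547 — 7 statements merged into one kernel-verified Lean document; each statement's English description precedes it below -/
import Mathlib

section
/- Let $G$ be a finite group, $K \trianglelefteq G$, and $x \in G$ with $\gcd(|x|, |K|) = 1$. Then the centralizer of $xK$ in $G/K$ equals the image $C_G(x)K/K$ of $C_G(x)$ in $G/K$. -/
open Subgroup
open scoped Pointwise

/-!
Write `x = a * b` with `a` a `p`-element and `b` of order prime to `p`, both powers of `x`.
The `p`-group `⟨a⟩` acts by conjugation on the coset `gK`, whose size `|K|` is prime to `p`, so
it fixes some `gk`. Then `b` commutes with `gk` modulo `K`, and one recurses on `b` inside the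
centralizer of `a`, where the relevant coset is one of `K ∩ C_G(a)`; hence the auxiliary
subgroup `H` in the statements below.
-/

section

variable {G : Type*} [Group G]

theorem exists_zpow_mul_zpow_eq_self (x : G) {m n : ℕ}
    (hx : orderOf x = m * n) (hmn : m.Coprime n) :
    ∃ i j : ℤ, x ^ i * x ^ j = x ∧ (x ^ i) ^ m = 1 ∧ (x ^ j) ^ n = 1 := by
  have hbez : (1 : ℤ) = n * Nat.gcdB m n + m * Nat.gcdA m n := by
    have := Nat.gcd_eq_gcd_ab m n
    rw [hmn, Nat.cast_one] at this
    linarith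
  have hxmn : x ^ ((m * n : ℕ) : ℤ) = 1 := by rw [zpow_natCast, ← hx, pow_orderOf_eq_one]
  refine ⟨n * Nat.gcdB m n, m * Nat.gcdA m n, ?_, ?_, ?_⟩
  · rw [← zpow_add, ← hbez, zpow_one]
  · rw [← zpow_natCast, ← zpow_mul,
      show (n * Nat.gcdB m n : ℤ) * m = (m * n : ℕ) * Nat.gcdB m n by push_cast; ring,
      zpow_mul, hxmn, one_zpow]
  · rw [← zpow_natCast, ← zpow_mul,
      show (m * Nat.gcdA m n : ℤ) * n = (m * n : ℕ) * Nat.gcdA m n by push_cast; ring,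
      zpow_mul, hxmn, one_zpow]

theorem inv_mul_mul_mul_inv_mem_of_commute {K : Subgroup G} [K.Normal] {c g : G}
    (h : Commute (c : G ⧸ K) g) : g⁻¹ * c * g * c⁻¹ ∈ K := by
  rw [← QuotientGroup.eq_one_iff]
  simp only [QuotientGroup.mk_mul, QuotientGroup.mk_inv]
  rw [mul_assoc _ (c : G ⧸ K), h.eq]
  group

theorem exists_mul_mem_centralizer_of_isPGroup [Finite G] {p : ℕ} [Fact p.Prime]
    {K : Subgroup G} [K.Normal] (hpK : ¬ p ∣ Nat.card K) {H P : Subgroup G}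
    (hP : IsPGroup p P) (hPH : P ≤ H) {g : G} (hg : g ∈ H)
    (hPg : ∀ c ∈ P, Commute (c : G ⧸ K) g) :
    ∃ k ∈ K ⊓ H, g * k ∈ centralizer P := by
  let φ : G →* ConjAct G := ConjAct.toConjAct.toMonoidHom
  let Ω : SubMulAction (P.map φ) G :=
    { carrier := g • ((K ⊓ H : Subgroup G) : Set G)
      smul_mem' := by
        rintro ⟨_, c, hc, rfl⟩ t ht
        rw [mem_leftCoset_iff] at ht ⊢
        obtain ⟨htK, htH⟩ := ht
        have hcH := hPH hc
        have hgc : g⁻¹ * c * g * c⁻¹ ∈ K ⊓ H :=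
          ⟨inv_mul_mul_mul_inv_mem_of_commute (hPg c hc),
            H.mul_mem (H.mul_mem (H.mul_mem (H.inv_mem hg) hcH) hg) (H.inv_mem hcH)⟩
        have hconj : c * (g⁻¹ * t) * c⁻¹ ∈ K ⊓ H :=
          ⟨Normal.conj_mem inferInstance _ htK c,
            H.mul_mem (H.mul_mem hcH htH) (H.inv_mem hcH)⟩
        change g⁻¹ * (c * t * c⁻¹) ∈ K ⊓ H
        -- `g⁻¹ (c t c⁻¹) = (g⁻¹ c g c⁻¹) (c (g⁻¹ t) c⁻¹)`
        convert (K ⊓ H).mul_mem hgc hconj using 1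
        group }
  have hΩ : Nat.card Ω = Nat.card (K ⊓ H : Subgroup G) :=
    Nat.card_congr (leftCosetEquivSubgroup g)
  obtain ⟨⟨t, ht⟩, hfix⟩ := (hP.map φ).nonempty_fixed_point_of_prime_not_dvd_card Ω <| by
    rw [hΩ]
    exact fun hdvd => hpK (hdvd.trans (card_dvd_of_le inf_le_left))
  refine ⟨g⁻¹ * t, (mem_leftCoset_iff g).mp ht, mem_centralizer_iff.mpr fun c hc => ?_⟩
  have hct : c * t * c⁻¹ = t :=
    congrArg Subtype.val (MulAction.mem_fixedPoints.mp hfix ⟨_, mem_map_of_mem _ hc⟩)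
  rw [mul_inv_cancel_left]
  exact mul_inv_eq_iff_eq_mul.mp hct

theorem exists_mem_inf_commute_mul_of_coprime [Finite G] {K : Subgroup G} [K.Normal]
    {H : Subgroup G} {x g : G} (hx : x ∈ H) (hg : g ∈ H)
    (hcop : (orderOf x).Coprime (Nat.card K)) (hxg : Commute (x : G ⧸ K) g) :
    ∃ k ∈ K ⊓ H, Commute x (g * k) := by
  induction hn : orderOf x using Nat.strong_induction_on generalizing H x g with
  | _ n ih =>
  rw [hn] at hcop
  rcases eq_or_ne n 1 with rfl | hn1
  · exact ⟨1, one_mem _, by simp [orderOf_eq_one_iff.mp hn]⟩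
  set p := n.minFac
  have hp : p.Prime := Nat.minFac_prime hn1
  have := Fact.mk hp
  have hn0 : n ≠ 0 := hn ▸ (orderOf_pos x).ne'
  set m := n / p ^ n.factorization p
  have hpm : p.Coprime m := Nat.coprime_ordCompl hp hn0
  have hmn : m < n := lt_of_le_of_ne (Nat.div_le_self _ _) fun h =>
    hp.one_lt.ne' (Nat.Coprime.eq_one_of_dvd hpm (h ▸ Nat.minFac_dvd n))
  obtain ⟨i, j, hxij, ha, hb⟩ := exists_zpow_mul_zpow_eq_self x
    (hn.trans (Nat.ordProj_mul_ordCompl_eq_self n p).symm) (hpm.pow_left _)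
  have hpow : ∀ c ∈ zpowers x, Commute (c : G ⧸ K) g := by
    rintro _ ⟨l, rfl⟩
    simpa only [QuotientGroup.mk_zpow] using hxg.zpow_left l
  obtain ⟨k₁, hk₁, hgk₁⟩ := exists_mul_mem_centralizer_of_isPGroup
    ((Nat.Prime.coprime_iff_not_dvd hp).mp (hcop.coprime_dvd_left (Nat.minFac_dvd n)))
    (P := zpowers (x ^ i))
    (IsPGroup.of_card_dvd_pow (by rw [Nat.card_zpowers]; exact orderOf_dvd_of_pow_eq_one ha))
    (zpowers_le.mpr (zpow_mem hx i)) hg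
    fun c hc => hpow c (zpowers_le.mpr (zpow_mem (mem_zpowers x) i) hc)
  have hzpowers_le : zpowers x ≤ centralizer (zpowers (x ^ i)) :=
    (le_centralizer (zpowers x)).trans
      (centralizer_le (zpowers_le.mpr (zpow_mem (mem_zpowers x) i)))
  have hbm : orderOf (x ^ j) ∣ m := orderOf_dvd_of_pow_eq_one hb
  obtain ⟨k₂, hk₂, hxgk⟩ := ih (orderOf (x ^ j))
    ((Nat.le_of_dvd (Nat.ordCompl_pos p hn0) hbm).trans_lt hmn)
    (H := H ⊓ centralizer (zpowers (x ^ i))) (x := x ^ j) (g := g * k₁)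
    ⟨zpow_mem hx j, hzpowers_le (zpow_mem (mem_zpowers x) j)⟩ ⟨H.mul_mem hg hk₁.2, hgk₁⟩
    (hcop.coprime_dvd_left (hbm.trans (Nat.div_dvd_of_dvd (Nat.ordProj_dvd n p))))
    (by
      rw [QuotientGroup.mk_mul, (QuotientGroup.eq_one_iff _).mpr hk₁.1, mul_one]
      exact hpow _ (zpow_mem (mem_zpowers x) j)) rfl
  refine ⟨k₁ * k₂, mul_mem hk₁ ⟨hk₂.1, hk₂.2.1⟩, ?_⟩
  rw [← hxij, ← mul_assoc]
  exact Commute.mul_left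
    (mem_centralizer_iff.mp (mul_mem hgk₁ hk₂.2.2) _ (mem_zpowers _)) hxgk

end

theorem centralizer_quotient_eq_map {G : Type*} [Group G] [Finite G]
    (K : Subgroup G) [K.Normal] (x : G)
    (hcop : Nat.Coprime (orderOf x) (Nat.card K)) :
    Subgroup.centralizer {(x : G ⧸ K)} =
      (Subgroup.centralizer {x}).map (QuotientGroup.mk' K) := by
  refine le_antisymm (fun q hq => ?_) ?_
  · obtain ⟨g, rfl⟩ := QuotientGroup.mk_surjective q
    obtain ⟨k, hk, hxgk⟩ := exists_mem_inf_commute_mul_of_coprime (H := ⊤) (mem_top x)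
      (mem_top g) hcop (mem_centralizer_singleton_iff.mp hq).symm
    refine ⟨g * k, mem_centralizer_singleton_iff.mpr hxgk.symm, ?_⟩
    simp [(QuotientGroup.eq_one_iff k).mpr hk.1]
  · simpa using map_centralizer_le_centralizer_image {x} (QuotientGroup.mk' K)
end

section
/- Let $G$ be a finite group and $g \in G$. If every conjugacy class of $G$ contains an element $h$ with $g \in C_G(h)$, then $g \in Z(G)$. -/
/-!
The hypothesis says that the conjugates of `C_G(g)` cover `G`. A subgroup `H` of index `k`
has at most `k` conjugates `x H x⁻¹`, one for each coset representative `x`, and they all contain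
`1`; so they cover at most `k (|H| - 1) + 1 = |G| - k + 1` elements, which forces `k = 1`.
Hence `C_G(g) = G`.
-/

namespace Subgroup

variable {G : Type*} [Group G] [Finite G]

theorem ncard_conjugatesOfSet_sdiff_one_le (H : Subgroup G) :
    (Group.conjugatesOfSet (H : Set G) \ {1}).ncard ≤ H.index * (Nat.card H - 1) := by
  let conjByRep : (G ⧸ H) × ((H : Set G) \ {1} : Set G) → G :=
    fun p => p.1.out * p.2 * p.1.out⁻¹
  have hsub : Group.conjugatesOfSet (H : Set G) \ {1} ⊆ Set.range conjByRep := by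
    rintro u ⟨hu, hu1 : u ≠ 1⟩
    obtain ⟨h, hH, x, rfl⟩ := by simpa only [Group.mem_conjugatesOfSet_iff, isConj_iff] using hu
    obtain ⟨k, hk⟩ := QuotientGroup.mk_out_eq_mul H x
    have hh1 : h ≠ 1 := by rintro rfl; simp at hu1
    have hconj : (k : G)⁻¹ * h * k ≠ 1 := by
      simpa only [inv_inv] using (conj_eq_one_iff (a := (k : G)⁻¹)).not.mpr hh1
    have hmem : (k : G)⁻¹ * h * k ∈ H := H.mul_mem (H.mul_mem (H.inv_mem k.2) hH) k.2
    refine ⟨((x : G ⧸ H), ⟨_, hmem, hconj⟩), ?_⟩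
    simp only [conjByRep, hk]
    group
  calc (Group.conjugatesOfSet (H : Set G) \ {1}).ncard
      ≤ Nat.card (Set.range conjByRep) := Set.ncard_le_ncard hsub (Set.toFinite _)
    _ ≤ Nat.card ((G ⧸ H) × ((H : Set G) \ {1} : Set G)) := Finite.card_range_le conjByRep
    _ = H.index * (Nat.card H - 1) := by
      rw [Nat.card_prod, Nat.card_coe_set_eq, Set.ncard_sdiff_singleton_of_mem H.one_mem,
        ← Nat.card_coe_set_eq, Subgroup.index]
      rfl

theorem eq_top_of_conjugatesOfSet_eq_univ {H : Subgroup G}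
    (hH : Group.conjugatesOfSet (H : Set G) = Set.univ) : H = ⊤ := by
  have hcount := H.ncard_conjugatesOfSet_sdiff_one_le
  rw [hH, Set.ncard_sdiff_singleton_of_mem (Set.mem_univ 1), Set.ncard_univ,
    ← H.card_mul_index, Nat.mul_sub_one, mul_comm H.index] at hcount
  have hindex : H.index ≠ 0 := index_ne_zero_of_finite
  have : H.index ≤ Nat.card H * H.index := Nat.le_mul_of_pos_left _ Nat.card_pos
  exact index_eq_one.mp (by omega)

end Subgroup

theorem mem_center_of_meets_all_classes {G : Type*} [Group G] [Finite G] (g : G)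
    (h : ∀ c : G, ∃ h : G, IsConj c h ∧ g ∈ Subgroup.centralizer {h}) :
    g ∈ Subgroup.center G := by
  have hcover : Group.conjugatesOfSet (Subgroup.centralizer {g} : Set G) = Set.univ := by
    refine Set.eq_univ_of_forall fun c => Group.mem_conjugatesOfSet_iff.mpr ?_
    obtain ⟨k, hck, hgk⟩ := h c
    exact ⟨k, Subgroup.mem_centralizer_singleton_iff.mpr
      (Subgroup.mem_centralizer_singleton_iff.mp hgk).symm, hck.symm⟩
  exact Subgroup.centralizer_eq_top_iff_subset.mp
    (Subgroup.eq_top_of_conjugatesOfSet_eq_univ hcover) rfl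
end

section
/- Let $G$ be a finite group, $N \trianglelefteq G$, $x \in G$, and suppose $\gcd(|x^G|, |N|) = 1$. Then $N \leq C_G(x)$. -/
/-!
The conjugacy class of `x` has `[G : C_G(x)]` elements. Since `N` is normal, `C_G(x) N` is a
subgroup, and `[C_G(x) N : C_G(x)] = [N : N ∩ C_G(x)]` divides both `[G : C_G(x)]` and `|N|`.
Coprimality forces this index to be `1`, i.e. `N ≤ C_G(x)`.
-/

namespace Subgroup

variable {G : Type*} [Group G]

theorem relIndex_sup_of_normal_right {H N : Subgroup G} [N.Normal] (hN : N.relIndex H ≠ 0) :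
    H.relIndex (H ⊔ N) = H.relIndex N := by
  -- Count `[H ⊔ N : H ⊓ N]` through `H` and through `N`; the second isomorphism theorem
  -- (`relIndex_sup_right`) identifies `[H : H ⊓ N]` with `[H ⊔ N : N]`.
  have hthroughH : (H ⊓ N).relIndex (H ⊔ N) = N.relIndex H * H.relIndex (H ⊔ N) := by
    rw [← relIndex_mul_relIndex _ _ _ inf_le_left le_sup_left, inf_relIndex_left]
  have hthroughN : (H ⊓ N).relIndex (H ⊔ N) = H.relIndex N * N.relIndex H := by
    rw [← relIndex_mul_relIndex _ _ _ inf_le_right le_sup_right, inf_relIndex_right,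
      relIndex_sup_right]
  exact Nat.eq_of_mul_eq_mul_left (Nat.pos_of_ne_zero hN)
    (by rw [← hthroughH, hthroughN, mul_comm])

theorem relIndex_dvd_index_of_normal_right {H N : Subgroup G} [N.Normal]
    (hN : N.relIndex H ≠ 0) : H.relIndex N ∣ H.index :=
  relIndex_sup_of_normal_right hN ▸ relIndex_dvd_index_of_le le_sup_left

theorem index_centralizer_singleton (x : G) :
    (centralizer {x}).index = Nat.card {y : G | IsConj x y} := by
  have horbit : MulAction.orbit (ConjAct G) x = {y : G | IsConj x y} := by
    ext y
    rw [ConjAct.mem_orbit_conjAct, Set.mem_ofPred_eq, isConj_comm]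
  rw [← horbit, Nat.card_coe_set_eq, ← MulAction.index_stabilizer,
    centralizer_eq_comap_stabilizer]
  exact index_comap_of_surjective _ ConjAct.toConjAct.surjective

end Subgroup

theorem normal_le_centralizer_of_coprime {G : Type*} [Group G] [Finite G]
    (N : Subgroup G) [N.Normal] (x : G)
    (hcop : Nat.Coprime (Nat.card {y : G | IsConj x y}) (Nat.card N)) :
    N ≤ Subgroup.centralizer {x} := by
  rw [← Subgroup.relIndex_eq_one]
  refine Nat.eq_one_of_dvd_coprimes (Subgroup.index_centralizer_singleton x ▸ hcop) ?_
    (Subgroup.relIndex_dvd_card _ _)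
  exact Subgroup.relIndex_dvd_index_of_normal_right Subgroup.FiniteIndex.index_ne_zero
end

section
/- Let $G$ be a finite group and $x \in G$ an element of minimal order among all elements $g$ with $|g^G| = n$, where $n$ is minimal in $N(G) \setminus \{1\}$ with respect to divisibility (i.e., no element of $N(G)\setminus\{1\}$ properly divides $n$). Then $x$ has prime power order. -/
open MulAction Subgroup

private lemma conj_class_card_eq_index {G : Type*} [Group G] [Finite G] (g : G) :
    Nat.card {y : G | IsConj g y} = (MulAction.stabilizer (ConjAct G) g).index := by
  have hset : {y : G | IsConj g y} = MulAction.orbit (ConjAct G) g := by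
    ext y
    rw [Set.mem_setOf_eq, ConjAct.mem_orbit_conjAct, isConj_comm]
  rw [hset, Nat.card_congr (MulAction.orbitEquivQuotientStabilizer (ConjAct G) g),
    ← Subgroup.index_eq_card]

private lemma stab_le_stab_pow {G : Type*} [Group G] (x : G) (k : ℕ) :
    MulAction.stabilizer (ConjAct G) x ≤ MulAction.stabilizer (ConjAct G) (x ^ k) := by
  intro h hh
  rw [MulAction.mem_stabilizer_iff, ConjAct.smul_def] at hh ⊢
  rw [← conj_pow, hh]

theorem minimal_class_size_element_prime_power_order {G : Type*} [Group G] [Finite G]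
    (n : ℕ) (x : G)
    (hx : Nat.card {y : G | IsConj x y} = n) (hn : 1 < n)
    (hmin : ∀ m : ℕ, (∃ g : G, Nat.card {y : G | IsConj g y} = m) → 1 < m → m ∣ n → m = n)
    (hord : ∀ g : G, Nat.card {y : G | IsConj g y} = n → orderOf x ≤ orderOf g) :
    IsPrimePow (orderOf x) := by
  by_contra h
  set o := orderOf x with ho_def
  have ho : o ≠ 0 := (orderOf_pos x).ne'
  have ho1 : o ≠ 1 := by
    intro h1
    have hx1 : x = 1 := orderOf_eq_one_iff.mp h1
    have : (MulAction.stabilizer (ConjAct G) x) = ⊤ := by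
      ext g; simp [MulAction.mem_stabilizer_iff, ConjAct.smul_def, hx1]
    rw [conj_class_card_eq_index, this, Subgroup.index_top] at hx
    omega
  set p := o.minFac with hp_def
  have hp : p.Prime := Nat.minFac_prime ho1
  set a := p ^ o.factorization p with ha_def
  set b := o / a with hb_def
  have hab : a * b = o := Nat.ordProj_mul_ordCompl_eq_self o p
  have hcop : Nat.Coprime a b := Nat.Coprime.pow_left _ (Nat.coprime_ordCompl hp ho)
  have hfp : 0 < o.factorization p :=
    hp.factorization_pos_of_dvd ho (Nat.minFac_dvd o)
  have ha1 : 1 < a := Nat.one_lt_pow hfp.ne' hp.one_lt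
  have hb1 : 1 < b := by
    rcases Nat.lt_or_ge b 2 with hb | hb
    · interval_cases b
      · omega
      · exact absurd ⟨p, o.factorization p, hp.prime, hfp, by omega⟩ h
    · omega
  -- a key fact: any power of x has class size dividing n
  have key : ∀ k : ℕ, (MulAction.stabilizer (ConjAct G) (x ^ k)).index ∣ n := by
    intro k
    rw [← hx, conj_class_card_eq_index]
    exact Subgroup.index_dvd_of_le (stab_le_stab_pow x k)
  -- any power x^k with 1 < orderOf (x^k) < o is central
  have central : ∀ k : ℕ, orderOf (x ^ k) < o → ∀ g : G, Commute g (x ^ k) := by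
    intro k hko g
    have hidx := key k
    by_cases h1 : (MulAction.stabilizer (ConjAct G) (x ^ k)).index = 1
    · have htop := Subgroup.index_eq_one.mp h1
      have : ConjAct.toConjAct g ∈ MulAction.stabilizer (ConjAct G) (x ^ k) := by
        rw [htop]; trivial
      rw [MulAction.mem_stabilizer_iff, ConjAct.smul_def, ConjAct.ofConjAct_toConjAct] at this
      exact mul_inv_eq_iff_eq_mul.mp this
    · exfalso
      have : Finite (ConjAct G) := ‹Finite G›
      have hne : (MulAction.stabilizer (ConjAct G) (x ^ k)).index ≠ 0 :=
        Subgroup.index_ne_zero_of_finite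
      have hm := hmin _ ⟨x ^ k, conj_class_card_eq_index (x ^ k)⟩ (by omega) hidx
      have := hord (x ^ k) (by rw [conj_class_card_eq_index]; exact hm)
      omega
  have hbdvd : b ∣ o := Dvd.intro_left a hab
  have hadvd : a ∣ o := Dvd.intro b hab
  have horda : orderOf (x ^ b) = a := by
    rw [orderOf_pow_of_dvd (by omega) hbdvd, ← ho_def, ← hab,
      Nat.mul_div_cancel _ (by omega)]
  have hordb : orderOf (x ^ a) = b := by
    rw [orderOf_pow_of_dvd (by omega) hadvd, ← ho_def, ← hab,
      Nat.mul_div_cancel_left _ (by omega)]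
  have hy : ∀ g : G, Commute g (x ^ b) :=
    central b (by rw [horda]; calc a < a * b := by nlinarith
                                   _ = o := hab)
  have hz : ∀ g : G, Commute g (x ^ a) :=
    central a (by rw [hordb]; calc b < a * b := by nlinarith
                                   _ = o := hab)
  -- x itself is central since gcd a b = 1
  have hxc : ∀ g : G, Commute g x := by
    intro g
    have h1 : Commute g (x ^ (a : ℤ)) := by rw [zpow_natCast]; exact hz g
    have h2 : Commute g (x ^ (b : ℤ)) := by rw [zpow_natCast]; exact hy g
    have : Commute g (x ^ ((a : ℤ) * Nat.gcdA a b + (b : ℤ) * Nat.gcdB a b)) := by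
      rw [zpow_add, zpow_mul, zpow_mul]
      exact (h1.zpow_right _).mul_right (h2.zpow_right _)
    rwa [← Nat.gcd_eq_gcd_ab, hcop.gcd_eq_one, Nat.cast_one, zpow_one] at this
  have : (MulAction.stabilizer (ConjAct G) x) = ⊤ := by
    ext g
    simp only [MulAction.mem_stabilizer_iff, ConjAct.smul_def, Subgroup.mem_top, iff_true]
    rw [(hxc (ConjAct.ofConjAct g)).eq, mul_inv_cancel_right]
  rw [conj_class_card_eq_index, this, Subgroup.index_top] at hx
  omega
end

section
/- Let $G$ be a finite group and suppose $g \in G$ can be written as $g = g_1 g_2$ where $g_1$ is a $p'$-element, $g_2$ is a $p$-element, $g_1 g_2 = g_2 g_1$. If $p$ does not divide $|g^G|$ and $|g_2^G|$ is a power of $p$, then $g_2 \in Z(G)$. -/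
/-! Since `g₁` and `g₂` commute and have coprime orders, `g₂` is a power of `g = g₁ g₂`, so
`C_G(g) ≤ C_G(g₂)` and `|g₂^G|` divides `|g^G|`. A power of `p` dividing a number prime to `p`
is `1`, so the class of `g₂` is a singleton. -/

section

variable {G : Type*} [Group G]

theorem Nat.card_setOf_isConj_eq_index_centralizer (a : G) :
    Nat.card {y : G | IsConj a y} = (Subgroup.centralizer ({a} : Set G)).index := by
  have horbit : {y : G | IsConj a y} = MulAction.orbit (ConjAct G) a := by
    ext y
    rw [Set.mem_ofPred_eq, ConjAct.mem_orbit_conjAct, isConj_comm]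
  rw [Nat.card_coe_set_eq, horbit, ← MulAction.index_stabilizer,
    Subgroup.centralizer_eq_comap_stabilizer]
  exact (Subgroup.index_comap_of_surjective _ ConjAct.toConjAct.surjective).symm

theorem Nat.card_setOf_isConj_pow_dvd (a : G) (n : ℕ) :
    Nat.card {y : G | IsConj (a ^ n) y} ∣ Nat.card {y : G | IsConj a y} := by
  simp only [Nat.card_setOf_isConj_eq_index_centralizer]
  refine Subgroup.index_dvd_of_le fun x hx => ?_
  rw [Subgroup.mem_centralizer_singleton_iff] at hx ⊢
  exact Commute.pow_right hx n

theorem Nat.card_setOf_isConj_eq_one_iff {a : G} :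
    Nat.card {y : G | IsConj a y} = 1 ↔ a ∈ Subgroup.center G := by
  rw [Nat.card_setOf_isConj_eq_index_centralizer, Subgroup.index_eq_one,
    Subgroup.centralizer_eq_top_iff_subset, Set.singleton_subset_iff, SetLike.mem_coe]

theorem Commute.exists_mul_pow_eq_right {a b : G} (hc : Commute a b)
    (hco : (orderOf a).Coprime (orderOf b)) : ∃ n : ℕ, (a * b) ^ n = b := by
  obtain ⟨n, ha, hb⟩ := Nat.chineseRemainder hco 0 1
  refine ⟨n, ?_⟩
  have ha' : a ^ (n : ℕ) = 1 := by rwa [← pow_zero a, pow_eq_pow_iff_modEq]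
  have hb' : b ^ (n : ℕ) = b := by
    conv_rhs => rw [← pow_one b]
    rwa [pow_eq_pow_iff_modEq]
  rw [hc.mul_pow, ha', hb', one_mul]

end

theorem p_part_central_general {G : Type*} [Group G] (p : ℕ)
    (g₁ g₂ : G) (hc : Commute g₁ g₂)
    (h₁ : Nat.Coprime (orderOf g₁) p) (h₂ : ∃ k : ℕ, orderOf g₂ = p ^ k)
    (hg : ¬ p ∣ Nat.card {y : G | IsConj (g₁ * g₂) y})
    (hg₂ : ∃ k : ℕ, Nat.card {y : G | IsConj g₂ y} = p ^ k) :
    g₂ ∈ Subgroup.center G := by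
  obtain ⟨k, hk⟩ := h₂
  obtain ⟨n, hn⟩ := hc.exists_mul_pow_eq_right (hk ▸ h₁.pow_right k)
  have hdvd : Nat.card {y : G | IsConj g₂ y} ∣ Nat.card {y : G | IsConj (g₁ * g₂) y} := by
    simpa only [hn] using Nat.card_setOf_isConj_pow_dvd (g₁ * g₂) n
  obtain ⟨k', hk'⟩ := hg₂
  obtain rfl : k' = 0 := by
    by_contra hk'0
    exact hg ((dvd_pow_self p hk'0).trans (hk' ▸ hdvd))
  rw [← Nat.card_setOf_isConj_eq_one_iff, hk', pow_zero]

theorem p_part_central {G : Type*} [Group G] [Finite G] (p : ℕ) (hp : p.Prime)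
    (g₁ g₂ : G) (hc : Commute g₁ g₂)
    (h₁ : Nat.Coprime (orderOf g₁) p) (h₂ : ∃ k : ℕ, orderOf g₂ = p ^ k)
    (hg : ¬ p ∣ Nat.card {y : G | IsConj (g₁ * g₂) y})
    (hg₂ : ∃ k : ℕ, Nat.card {y : G | IsConj g₂ y} = p ^ k) :
    g₂ ∈ Subgroup.center G :=
  p_part_central_general p g₁ g₂ hc h₁ h₂ hg hg₂
end

section
/- Let $P$ be a finite abelian $p$-group acting on a finite group $X$ of order coprime to $p$, such that the action is fixed-point-free on a nontrivial subgroup (i.e., for every nontrivial $y$ in a nontrivial $P$-invariant subgroup $Y \leq X$, $C_P(y) = 1$). Then $P$ is cyclic. -/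
open Finset Pointwise

section Aux

variable {P : Type*} [CommGroup P]

private lemma aux_pow_val_add {p : ℕ} [NeZero p] {g : P} (hg : g ^ p = 1) (z w : ZMod p) :
    g ^ (z + w).val = g ^ z.val * g ^ w.val := by
  rw [← pow_add, pow_eq_pow_iff_modEq]
  have h1 : (z + w).val ≡ z.val + w.val [MOD p] := by
    rw [ZMod.val_add]; exact Nat.mod_modEq _ p
  exact h1.of_dvd (orderOf_dvd_of_pow_eq_one hg)

private lemma aux_core_pow_eq_one (p : ℕ) (hp : p.Prime)
    {V : Type*} [CommGroup V] (ρ : P →* Monoid.End V)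
    (a b : P) (hap : a ^ p = 1) (hbp : b ^ p = 1) (ha : a ≠ 1) (hb : b ≠ 1)
    (hab : ∀ n : ℕ, a * b ^ n ≠ 1)
    (hfpf : ∀ w : V, w ≠ 1 → ∀ g : P, g ≠ 1 → ρ g w ≠ w)
    (v : V) : v ^ p = 1 := by
  classical
  haveI : Fact p.Prime := ⟨hp⟩
  haveI : NeZero p := ⟨hp.ne_zero⟩
  haveI : Fact (1 < p) := ⟨hp.one_lt⟩
  have fixstep : ∀ g : P, g ≠ 1 → ∀ w : V, ρ g w = w → w = 1 := by
    intro g hg w hw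
    by_contra hw1
    exact hfpf w hw1 g hg hw
  have hcomp : ∀ (g h : P) (w : V), ρ g (ρ h w) = ρ (g * h) w := by
    intro g h w
    rw [map_mul]
    rfl
  set F : ZMod p → ZMod p → V := fun i j => ρ (a ^ i.val * b ^ j.val) v with hF
  have expand : ∀ (g : P) (i j : ZMod p), ρ g (F i j) = ρ (g * (a ^ i.val * b ^ j.val)) v := by
    intro g i j
    rw [hF, hcomp]
  have expand_a : ∀ i j : ZMod p, ρ a (F i j) = F (i + 1) j := by
    intro i j
    rw [expand]
    have harg : a * (a ^ i.val * b ^ j.val) = a ^ (i + 1).val * b ^ j.val := by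
      rw [aux_pow_val_add hap, ZMod.val_one, pow_one]
      simp only [mul_comm, mul_left_comm, mul_assoc]
    rw [harg]
  have expand_b : ∀ i j : ZMod p, ρ b (F i j) = F i (j + 1) := by
    intro i j
    rw [expand]
    have harg : b * (a ^ i.val * b ^ j.val) = a ^ i.val * b ^ (j + 1).val := by
      rw [aux_pow_val_add hbp, ZMod.val_one, pow_one]
      simp only [mul_comm, mul_left_comm, mul_assoc]
    rw [harg]
  have expand_c : ∀ (k i j : ZMod p), ρ (a * b ^ k.val) (F i j) = F (i + 1) (j + k) := by
    intro k i j
    rw [expand]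
    have harg : a * b ^ k.val * (a ^ i.val * b ^ j.val)
        = a ^ (i + 1).val * b ^ (j + k).val := by
      rw [aux_pow_val_add hap, ZMod.val_one, pow_one, aux_pow_val_add hbp]
      simp only [mul_comm, mul_left_comm, mul_assoc]
    rw [harg]
  -- the three vanishing products
  have hUinf : (∏ j : ZMod p, F 0 j) = 1 := by
    refine fixstep b hb _ ?_
    rw [map_prod]
    refine Fintype.prod_equiv (Equiv.addRight (1 : ZMod p)) _ _ ?_
    intro j
    simp [expand_b 0 j]
  have hS : (∏ i : ZMod p, ∏ j : ZMod p, F i j) = 1 := by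
    refine fixstep a ha _ ?_
    simp only [map_prod]
    refine Fintype.prod_equiv (Equiv.addRight (1 : ZMod p)) _ _ ?_
    intro i
    refine Finset.prod_congr rfl fun j _ => ?_
    simp [expand_a i j]
  have hUk : ∀ k : ZMod p, (∏ i : ZMod p, F i (k * i)) = 1 := by
    intro k
    refine fixstep (a * b ^ k.val) (hab k.val) _ ?_
    rw [map_prod]
    refine Fintype.prod_equiv (Equiv.addRight (1 : ZMod p)) _ _ ?_
    intro i
    rw [expand_c k i (k * i)]
    have : k * i + k = k * (i + 1) := by ring
    simp [this]
  -- split off the `i = 0` part of `hS`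
  have hsplit : (∏ i ∈ ({0}ᶜ : Finset (ZMod p)), ∏ j : ZMod p, F i j) = 1 := by
    have h := hS
    rw [Fintype.prod_eq_mul_prod_compl (0 : ZMod p), hUinf, one_mul] at h
    simpa using h
  have hF00 : F 0 0 = v := by
    simp [hF]
  have h1 : (1 : V) = v ^ p * 1 := by
    calc (1 : V) = ∏ k : ZMod p, ∏ i : ZMod p, F i (k * i) := by
          rw [Finset.prod_congr rfl fun k _ => hUk k, Finset.prod_const_one]
      _ = ∏ i : ZMod p, ∏ k : ZMod p, F i (k * i) := Finset.prod_comm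
      _ = (∏ k : ZMod p, F 0 (k * 0)) *
            ∏ i ∈ ({0}ᶜ : Finset (ZMod p)), ∏ k : ZMod p, F i (k * i) :=
          Fintype.prod_eq_mul_prod_compl 0 _
      _ = v ^ p * 1 := by
          congr 1
          · rw [Finset.prod_congr rfl fun k _ => by rw [mul_zero, hF00]]
            rw [Finset.prod_const, Finset.card_univ, ZMod.card]
          · rw [← hsplit]
            refine Finset.prod_congr rfl fun i hi => ?_
            have hi0 : i ≠ 0 := by simpa using hi
            refine Fintype.prod_equiv (Equiv.mulRight₀ i hi0) _ _ fun k => ?_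
            simp
  simpa using h1.symm

private lemma aux_exists_indep (p : ℕ) (hp : p.Prime) (P : Type*) [CommGroup P] [Finite P]
    (hP : IsPGroup p P) (hnc : ¬ IsCyclic P) :
    ∃ a b : P, a ≠ 1 ∧ b ≠ 1 ∧ a ^ p = 1 ∧ b ^ p = 1 ∧ ∀ n : ℕ, a * b ^ n ≠ 1 := by
  classical
  haveI : Fact p.Prime := ⟨hp⟩
  obtain ⟨ι, hfin, n, hn, ⟨e⟩⟩ := CommGroup.equiv_prod_multiplicative_zmod_of_finite P
  haveI : ∀ i, NeZero (n i) := fun i => ⟨by have := hn i; omega⟩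
  by_cases hsub : Subsingleton ι
  · exfalso
    apply hnc
    rcases isEmpty_or_nonempty ι with h | h
    · haveI : Subsingleton (∀ i, Multiplicative (ZMod (n i))) :=
        ⟨fun f g => funext fun i => h.elim i⟩
      haveI : Subsingleton P := e.toEquiv.subsingleton
      exact isCyclic_of_subsingleton
    · haveI := Classical.inhabited_of_nonempty h
      haveI : Unique ι := Unique.mk' ι
      exact isCyclic_of_surjective (e.trans (MulEquiv.piUnique _)).symm
        (e.trans (MulEquiv.piUnique _)).symm.surjective
  · rw [not_subsingleton_iff_nontrivial] at hsub
    obtain ⟨i, j, hij⟩ := exists_pair_ne ι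
    have hdvd : ∀ k : ι, p ∣ n k := by
      intro k
      obtain ⟨m, hm⟩ := IsPGroup.iff_card.mp hP
      have hcard : Nat.card P = ∏ t, n t := by
        rw [Nat.card_congr e.toEquiv, Nat.card_pi]
        exact Finset.prod_congr rfl fun t _ => by
          rw [Nat.card_congr (Multiplicative.ofAdd (α := ZMod (n t))).symm, Nat.card_zmod]
      have h1 : n k ∣ p ^ m := by
        rw [← hm, hcard]; exact Finset.dvd_prod_of_mem _ (Finset.mem_univ k)
      obtain ⟨t, _, hteq⟩ := (Nat.dvd_prime_pow hp).mp h1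
      have ht0 : t ≠ 0 := by
        rintro rfl
        rw [pow_zero] at hteq
        have := hn k
        omega
      rw [hteq]
      exact dvd_pow_self p ht0
    have hel : ∀ k : ι, ∃ y : Multiplicative (ZMod (n k)), y ≠ 1 ∧ y ^ p = 1 := by
      intro k
      set x : Multiplicative (ZMod (n k)) := Multiplicative.ofAdd 1 with hx
      have hox : orderOf x = n k := by
        rw [hx, orderOf_ofAdd_eq_addOrderOf, ZMod.addOrderOf_one]
      have hnk1 : 1 < n k := hn k
      have hdp : 0 < n k / p := Nat.div_pos (Nat.le_of_dvd (by omega) (hdvd k)) hp.pos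
      refine ⟨x ^ (n k / p), ?_, ?_⟩
      · intro h
        have hd := orderOf_dvd_of_pow_eq_one h
        rw [hox] at hd
        have hlt : n k / p < n k := Nat.div_lt_self (by omega) hp.one_lt
        have := Nat.le_of_dvd hdp hd
        omega
      · have hpw := pow_orderOf_eq_one x
        rw [hox] at hpw
        rw [← pow_mul, Nat.div_mul_cancel (hdvd k)]
        exact hpw
    obtain ⟨yi, hyi1, hyip⟩ := hel i
    obtain ⟨yj, hyj1, hyjp⟩ := hel j
    refine ⟨e.symm (Pi.mulSingle i yi), e.symm (Pi.mulSingle j yj), ?_, ?_, ?_, ?_, ?_⟩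
    · intro h
      apply hyi1
      have h2 : Pi.mulSingle i yi = 1 := e.symm.injective (h.trans (map_one e.symm).symm)
      simpa using congrFun h2 i
    · intro h
      apply hyj1
      have h2 : Pi.mulSingle j yj = 1 := e.symm.injective (h.trans (map_one e.symm).symm)
      simpa using congrFun h2 j
    · rw [← map_pow, ← Pi.mulSingle_pow, hyip, Pi.mulSingle_one, map_one]
    · rw [← map_pow, ← Pi.mulSingle_pow, hyjp, Pi.mulSingle_one, map_one]
    · intro m hme
      rw [← map_pow, ← map_mul] at hme
      have h2 := e.symm.injective (hme.trans (map_one e.symm).symm)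
      have h3 := congrFun h2 i
      simp only [Pi.mul_apply, Pi.pow_apply, Pi.mulSingle_eq_same, Pi.one_apply,
        Pi.mulSingle_eq_of_ne hij, one_pow, mul_one] at h3
      exact hyi1 h3

end Aux

theorem fixed_point_free_abelian_p_group_is_cyclic
    (p : ℕ) (hp : p.Prime) (P : Type*) [CommGroup P] [Finite P] (hP : IsPGroup p P)
    (Y : Type*) [Group Y] [Finite Y] [Nontrivial Y] [MulDistribMulAction P Y]
    (hcop : Nat.Coprime (Nat.card P) (Nat.card Y))
    (hfpf : ∀ y : Y, y ≠ 1 → ∀ g : P, g ≠ 1 → g • y ≠ y) :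
    IsCyclic P := by
  by_contra hnc
  haveI : Fact p.Prime := ⟨hp⟩
  haveI hPnt : Nontrivial P := by
    rcases subsingleton_or_nontrivial P with h | h
    · exact absurd isCyclic_of_subsingleton hnc
    · exact h
  have hpP : p ∣ Nat.card P := by
    obtain ⟨m, hm⟩ := IsPGroup.iff_card.mp hP
    have hm0 : m ≠ 0 := by
      rintro rfl
      rw [pow_zero] at hm
      exact (Finite.one_lt_card_iff_nontrivial.mpr hPnt).ne' hm
    rw [hm]
    exact dvd_pow_self p hm0
  have hpY : ¬ p ∣ Nat.card Y := by
    intro h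
    exact hp.ne_one (Nat.dvd_one.mp (hcop ▸ Nat.dvd_gcd hpP h))
  set q := (Nat.card Y).minFac with hqdef
  have hY1 : Nat.card Y ≠ 1 := (Finite.one_lt_card_iff_nontrivial.mpr ‹_›).ne'
  have hq : q.Prime := Nat.minFac_prime hY1
  have hqY : q ∣ Nat.card Y := Nat.minFac_dvd _
  haveI : Fact q.Prime := ⟨hq⟩
  haveI : Finite (Sylow q Y) :=
    Finite.of_injective Sylow.toSubgroup fun _ _ h => Sylow.ext h
  have hsyl : ¬ p ∣ Nat.card (Sylow q Y) := by
    intro h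
    obtain ⟨Q'⟩ : Nonempty (Sylow q Y) := Sylow.nonempty
    exact hpY (h.trans (Q'.card_dvd_index.trans (Subgroup.index_dvd_card _)))
  obtain ⟨Q, hQ⟩ := hP.nonempty_fixed_point_of_prime_not_dvd_card (Sylow q Y) hsyl
  rw [MulAction.mem_fixedPoints] at hQ
  have hQfix : ∀ g : P, g • (Q : Subgroup Y) = (Q : Subgroup Y) := by
    intro g
    have h := congrArg Sylow.toSubgroup (hQ g)
    rwa [Sylow.pointwise_smul_def] at h
  have hq_card : q ∣ Nat.card ↥(Q : Subgroup Y) := by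
    rw [Q.card_eq_multiplicity]
    exact dvd_pow_self q (Nat.Prime.factorization_pos_of_dvd hq Nat.card_pos.ne' hqY).ne'
  haveI : Nontrivial ↥(Q : Subgroup Y) := by
    rw [← Finite.one_lt_card_iff_nontrivial]
    rcases Nat.lt_or_ge 1 (Nat.card ↥(Q : Subgroup Y)) with h | h
    · exact h
    · exfalso
      interval_cases h' : Nat.card ↥(Q : Subgroup Y)
      · exact Nat.card_pos.ne' h'
      · exact hq.ne_one (Nat.dvd_one.mp (h' ▸ hq_card))
  have hcenter : Nontrivial ↥(Subgroup.center ↥(Q : Subgroup Y)) :=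
    IsPGroup.center_nontrivial Q.isPGroup'
  obtain ⟨z, hz1⟩ := @exists_ne _ hcenter 1
  set v₀ : Y := ((z : ↥(Q : Subgroup Y)) : Y) with hv₀def
  have hv₀ : v₀ ≠ 1 := by
    simp only [hv₀def]
    intro h
    apply hz1
    exact_mod_cast h
  set K : Subgroup Y :=
    (Q : Subgroup Y) ⊓ Subgroup.centralizer ((Q : Subgroup Y) : Set Y) with hK
  have hv₀K : v₀ ∈ K := by
    rw [hK, Subgroup.mem_inf]
    refine ⟨(z : ↥(Q : Subgroup Y)).2, Subgroup.mem_centralizer_iff.mpr ?_⟩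
    intro y hy
    exact congrArg Subtype.val (Subgroup.mem_center_iff.mp z.2 ⟨y, hy⟩)
  have hKinv : ∀ (g : P), ∀ x ∈ K, g • x ∈ K := by
    intro g x hx
    rw [hK, Subgroup.mem_inf] at hx ⊢
    obtain ⟨hxQ, hxC⟩ := hx
    refine ⟨?_, Subgroup.mem_centralizer_iff.mpr ?_⟩
    · have h := Subgroup.smul_mem_pointwise_smul x g (Q : Subgroup Y) hxQ
      rwa [hQfix g] at h
    · intro y hy
      have hy' : g⁻¹ • y ∈ (Q : Subgroup Y) := by
        have h := Subgroup.smul_mem_pointwise_smul y g⁻¹ (Q : Subgroup Y) hy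
        rwa [hQfix g⁻¹] at h
      have hc := Subgroup.mem_centralizer_iff.mp hxC (g⁻¹ • y) hy'
      calc y * (g • x) = g • ((g⁻¹ • y) * x) := by rw [smul_mul', smul_inv_smul]
        _ = g • (x * (g⁻¹ • y)) := by rw [hc]
        _ = (g • x) * y := by rw [smul_mul', smul_inv_smul]
  letI : CommGroup ↥K :=
    { (inferInstance : Group ↥K) with
      mul_comm := fun x y =>
        Subtype.ext (Subgroup.mem_centralizer_iff.mp x.2.2 (y : Y) y.2.1).symm }
  let ρ : P →* Monoid.End ↥K :=
    { toFun := fun g =>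
        { toFun := fun x => ⟨g • (x : Y), hKinv g x x.2⟩
          map_one' := Subtype.ext (by simp)
          map_mul' := fun x y => Subtype.ext (by simp [smul_mul']) }
      map_one' := MonoidHom.ext fun x => Subtype.ext (one_smul P (x : Y))
      map_mul' := fun g h => MonoidHom.ext fun x => Subtype.ext (mul_smul g h (x : Y)) }
  have hfpfK : ∀ w : ↥K, w ≠ 1 → ∀ g : P, g ≠ 1 → ρ g w ≠ w := by
    intro w hw g hg h
    have h2 : g • (w : Y) = (w : Y) := congrArg Subtype.val h
    have hw1 : (w : Y) ≠ 1 := fun hh => hw (by exact_mod_cast hh)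
    exact hfpf (w : Y) hw1 g hg h2
  obtain ⟨a, b, ha, hb, hap, hbp, hab⟩ := aux_exists_indep p hp P hP hnc
  have hvpow := aux_core_pow_eq_one p hp ρ a b hap hbp ha hb hab hfpfK ⟨v₀, hv₀K⟩
  have h1 : orderOf (⟨v₀, hv₀K⟩ : ↥K) ∣ p := orderOf_dvd_of_pow_eq_one hvpow
  have h2 : orderOf (⟨v₀, hv₀K⟩ : ↥K) ∣ Nat.card Y :=
    (orderOf_dvd_natCard _).trans (Subgroup.card_subgroup_dvd_card K)
  rcases hp.eq_one_or_self_of_dvd _ h1 with h | h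
  · have h3 : (⟨v₀, hv₀K⟩ : ↥K) = 1 := orderOf_eq_one_iff.mp h
    exact hv₀ (congrArg Subtype.val h3)
  · exact hpY (h ▸ h2)
end

section
/- Let $G$ be a finite group and $x, y \in G$ commuting elements of coprime order. Then $|x^G|$ divides $|(xy)^G|$. -/
theorem card_conjClass_dvd_of_commute_coprime {G : Type*} [Group G] [Finite G]
    (x y : G) (hc : Commute x y) (hcop : Nat.Coprime (orderOf x) (orderOf y)) :
    Nat.card {z : G | IsConj x z} ∣ Nat.card {z : G | IsConj (x * y) z} := by
  obtain ⟨k, hk1, hk2⟩ := Nat.chineseRemainder hcop 1 0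
  have hxy : (x * y) ^ k = x := by
    rw [hc.mul_pow]
    have hy : y ^ k = 1 := orderOf_dvd_iff_pow_eq_one.mp ((Nat.modEq_zero_iff_dvd).mp hk2)
    have hx : x ^ k = x := by
      conv_rhs => rw [← pow_one x]
      exact pow_eq_pow_iff_modEq.mpr hk1
    rw [hx, hy, mul_one]
  have hset : ∀ w : G, {z : G | IsConj w z} = MulAction.orbit (ConjAct G) w := by
    intro w
    ext z
    simp only [Set.mem_setOf_eq, ConjAct.mem_orbit_conjAct]
    exact isConj_comm
  have hle : MulAction.stabilizer (ConjAct G) (x * y) ≤ MulAction.stabilizer (ConjAct G) x := by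
    intro g hg
    have hg' : g • (x * y) = x * y := hg
    have : g • x = x := by
      rw [← hxy, smul_pow', hg']
    exact this
  rw [hset, hset, Nat.card_coe_set_eq, Nat.card_coe_set_eq,
    ← MulAction.index_stabilizer, ← MulAction.index_stabilizer]
  exact Subgroup.index_dvd_of_le hle
end
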